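/- The tree-adjoining-style grammar with initial trees S → (A, (T)→a), S → (B, (T)→b) and auxiliary trees T → (A, (T)→(T, a)), T → (B, (T)→(T, b)), where A → a and B → b are substitution trees and adjunction is only allowed at the marked nodes (T), generates exactly the copy language { w w : w ∈ {a,b}⁺ }. -/

import Mathlib

/-- Node labels of LTAG₀ trees: terminals, substitution leaves A↓, substitution
nonterminals, adjunction-marked nodes (T), unmarked adjunction nonterminals and
foot nodes T*. -/
inductive Lab (T NS NA : Type) where
  | term : T → Lab T NS NA        -- terminal leaf
  | substLeaf : NS → Lab T NS NA  -- A↓, awaiting substitution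
  | nonterm : NS → Lab T NS NA    -- substitution nonterminal (root/internal)
  | adj : NA → Lab T NS NA        -- (T), adjunction allowed here
  | anode : NA → Lab T NS NA      -- adjunction nonterminal, no adjunction mark
  | foot : NA → Lab T NS NA       -- T*, foot node of an auxiliary tree

/-- Finitely branching labelled trees. -/
inductive LTree (T NS NA : Type) where
  | node : Lab T NS NA → List (LTree T NS NA) → LTree T NS NA

namespace LTree

variable {T NS NA : Type}

def rootLabel : LTree T NS NA → Lab T NS NA
  | .node l _ => l

mutual
  /-- The yield of a tree: the sequence of terminals at its leaves. -/
  def yield : LTree T NS NA → List T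
    | .node (.term a) _ => [a]
    | .node (.substLeaf _) cs => yields cs
    | .node (.nonterm _) cs => yields cs
    | .node (.adj _) cs => yields cs
    | .node (.anode _) cs => yields cs
    | .node (.foot _) cs => yields cs
  def yields : List (LTree T NS NA) → List T
    | [] => []
    | t :: ts => yield t ++ yields ts
end

mutual
  /-- The number of terminal leaves of a tree. -/
  def termCount : LTree T NS NA → ℕ
    | .node (.term _) _ => 1
    | .node (.substLeaf _) cs => termCounts cs
    | .node (.nonterm _) cs => termCounts cs
    | .node (.adj _) cs => termCounts cs
    | .node (.anode _) cs => termCounts cs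
    | .node (.foot _) cs => termCounts cs
  def termCounts : List (LTree T NS NA) → ℕ
    | [] => 0
    | t :: ts => termCount t + termCounts ts
end

mutual
  /-- The number of foot nodes of a tree. -/
  def footCount : LTree T NS NA → ℕ
    | .node (.foot _) cs => 1 + footCounts cs
    | .node (.term _) cs => footCounts cs
    | .node (.substLeaf _) cs => footCounts cs
    | .node (.nonterm _) cs => footCounts cs
    | .node (.adj _) cs => footCounts cs
    | .node (.anode _) cs => footCounts cs
  def footCounts : List (LTree T NS NA) → ℕ
    | [] => 0
    | t :: ts => footCount t + footCounts ts
end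

mutual
  /-- A tree is complete when all of its leaves are terminal leaves. -/
  def Complete : LTree T NS NA → Prop
    | .node (.term _) cs => cs = []
    | .node (.substLeaf _) _ => False
    | .node (.foot _) _ => False
    | .node (.nonterm _) cs => cs ≠ [] ∧ CompleteList cs
    | .node (.adj _) cs => cs ≠ [] ∧ CompleteList cs
    | .node (.anode _) cs => cs ≠ [] ∧ CompleteList cs
  def CompleteList : List (LTree T NS NA) → Prop
    | [] => True
    | t :: ts => Complete t ∧ CompleteList ts
end

/-- The subtree relation. -/
inductive Subtree : LTree T NS NA → LTree T NS NA → Prop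
  | refl (t : LTree T NS NA) : Subtree t t
  | child {s u : LTree T NS NA} (l : Lab T NS NA) (cs : List (LTree T NS NA)) :
      u ∈ cs → Subtree s u → Subtree s (.node l cs)

/-- Substitution of the tree β (with root label `nonterm A`) for one
substitution leaf A↓. -/
inductive ReplaceSubst (β : LTree T NS NA) (A : NS) :
    LTree T NS NA → LTree T NS NA → Prop
  | here : rootLabel β = .nonterm A → ReplaceSubst β A (.node (.substLeaf A) []) β
  | step (l : Lab T NS NA) (pre post : List (LTree T NS NA)) {t t' : LTree T NS NA} :
      ReplaceSubst β A t t' →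
      ReplaceSubst β A (.node l (pre ++ t :: post)) (.node l (pre ++ t' :: post))

/-- Replacement of the foot node n* by the tree `sub`. -/
inductive FootReplace (n : NA) (sub : LTree T NS NA) :
    LTree T NS NA → LTree T NS NA → Prop
  | here : FootReplace n sub (.node (.foot n) []) sub
  | step (l : Lab T NS NA) (pre post : List (LTree T NS NA)) {t t' : LTree T NS NA} :
      FootReplace n sub t t' →
      FootReplace n sub (.node l (pre ++ t :: post)) (.node l (pre ++ t' :: post))

/-- Adjunction of the auxiliary(-derived) tree β (root `anode n`, with a foot
node n*) at one node marked (n): the marked node is replaced by β, and the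
original subtree below the node is spliced in at the foot of β. -/
inductive Adjoin (β : LTree T NS NA) : LTree T NS NA → LTree T NS NA → Prop
  | here (n : NA) (cs : List (LTree T NS NA)) {β' : LTree T NS NA} :
      rootLabel β = .anode n →
      FootReplace n (.node (.anode n) cs) β β' →
      Adjoin β (.node (.adj n) cs) β'
  | step (l : Lab T NS NA) (pre post : List (LTree T NS NA)) {t t' : LTree T NS NA} :
      Adjoin β t t' →
      Adjoin β (.node l (pre ++ t :: post)) (.node l (pre ++ t' :: post))

end LTree

/-- An LTAG₀ grammar: a start symbol, initial trees and auxiliary trees. -/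
structure LTAG0 (T NS NA : Type) where
  start : NS
  initial : Set (LTree T NS NA)
  auxTrees : Set (LTree T NS NA)

namespace LTAG0

variable {T NS NA : Type} (g : LTAG0 T NS NA)

/-- Well-formedness of an LTAG₀ grammar: finitely many elementary trees; every
elementary tree has exactly one terminal leaf; initial trees are rooted in
substitution nonterminals and have no foot node; every auxiliary tree is rooted
in an adjunction nonterminal and has exactly one foot node, labelled by the
same adjunction nonterminal as its root; and every adjunction node lies on the
path from the terminal leaf to the root (i.e. every subtree rooted at an
adjunction mark contains the terminal leaf). -/
def WellFormed : Prop :=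
  g.initial.Finite ∧ g.auxTrees.Finite ∧
  (∀ t ∈ g.initial ∪ g.auxTrees, LTree.termCount t = 1) ∧
  (∀ t ∈ g.initial, (∃ A : NS, LTree.rootLabel t = .nonterm A) ∧ LTree.footCount t = 0) ∧
  (∀ t ∈ g.auxTrees, ∃ n : NA, LTree.rootLabel t = .anode n ∧ LTree.footCount t = 1 ∧
      ∀ u, LTree.Subtree u t → ∀ m : NA, LTree.rootLabel u = .foot m → m = n) ∧
  (∀ t ∈ g.initial ∪ g.auxTrees, ∀ u, LTree.Subtree u t →
      (∃ n : NA, LTree.rootLabel u = .adj n) → 1 ≤ LTree.termCount u)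

/-- Derived trees: elementary trees closed under substitution and adjunction. -/
inductive Derived : LTree T NS NA → Prop
  | init {t} : t ∈ g.initial → Derived t
  | auxMem {t} : t ∈ g.auxTrees → Derived t
  | subst {t β t'} (A : NS) : Derived t → Derived β →
      LTree.ReplaceSubst β A t t' → Derived t'
  | adjoin {t β t'} : Derived t → Derived β →
      LTree.Adjoin β t t' → Derived t'

/-- The language generated by an LTAG₀ grammar: the yields of complete derived
trees rooted in the start symbol. -/
def language : Set (List T) :=
  {w | ∃ t, g.Derived t ∧ LTree.rootLabel t = .nonterm g.start ∧
        LTree.Complete t ∧ LTree.yield t = w}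

end LTAG0

/-- Substitution nonterminals of the copy grammar. -/
inductive NS3 where
  | S | A | B
  deriving DecidableEq

open LTree Lab in
/-- The copy grammar: initial trees S → (A↓, (T)→a), S → (B↓, (T)→b) and the
substitution trees A → a, B → b; auxiliary trees T → (A↓, (T)→(T*, a)),
T → (B↓, (T)→(T*, b)).  Terminals: 0 = a, 1 = b; there is a single adjunction
nonterminal T. -/
def copyGrammar : LTAG0 (Fin 2) NS3 Unit where
  start := NS3.S
  initial :=
    { LTree.node (.nonterm NS3.S)
        [LTree.node (.substLeaf NS3.A) [],
         LTree.node (.adj ()) [LTree.node (.term 0) []]],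
      LTree.node (.nonterm NS3.S)
        [LTree.node (.substLeaf NS3.B) [],
         LTree.node (.adj ()) [LTree.node (.term 1) []]],
      LTree.node (.nonterm NS3.A) [LTree.node (.term 0) []],
      LTree.node (.nonterm NS3.B) [LTree.node (.term 1) []] }
  auxTrees :=
    { LTree.node (.anode ())
        [LTree.node (.substLeaf NS3.A) [],
         LTree.node (.adj ()) [LTree.node (.foot ()) [], LTree.node (.term 0) []]],
      LTree.node (.anode ())
        [LTree.node (.substLeaf NS3.B) [],
         LTree.node (.adj ()) [LTree.node (.foot ()) [], LTree.node (.term 1) []]] }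

/-! Every derived tree is a letter tree `A → a`, `B → b`, or an initial (`S`) or auxiliary
(`T`) root over a substitution slot and a *spine*: the auxiliary trees adjoined one below the
other at the original `(T)` node. Substitution can only fill slots, and adjunction can only
happen at the lowest `(T)` node of a spine, where it extends the word spelled by the spine.
An auxiliary tree for a letter `d` contributes `d` through its slot, left of its foot, and its
terminal `d` right of it; so a complete spine spelling `v` over children yielding `u` yields
`v ++ u ++ v`, and a complete `S`-tree whose initial tree is the one for `c` yields
`(c :: v) ++ (c :: v)`. Conversely, adjoining the auxiliary trees for the letters of `v` into
that initial tree derives it. -/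

namespace LTree

variable {T NS NA : Type}

mutual
/-- `Step r t t'`: `t'` arises from `t` by one `r`-step at a single node. Unlike the
`pre ++ t :: post` presentation of `ReplaceSubst`, `FootReplace` and `Adjoin`, it can be
inverted on concrete trees by `cases`. -/
inductive Step (r : LTree T NS NA → LTree T NS NA → Prop) :
    LTree T NS NA → LTree T NS NA → Prop
  | here {t t' : LTree T NS NA} : r t t' → Step r t t'
  | child (l : Lab T NS NA) {cs cs' : List (LTree T NS NA)} :
      ChildStep r cs cs' → Step r (.node l cs) (.node l cs')

inductive ChildStep (r : LTree T NS NA → LTree T NS NA → Prop) :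
    List (LTree T NS NA) → List (LTree T NS NA) → Prop
  | head {t t' : LTree T NS NA} (ts : List (LTree T NS NA)) :
      Step r t t' → ChildStep r (t :: ts) (t' :: ts)
  | tail (t : LTree T NS NA) {ts ts' : List (LTree T NS NA)} :
      ChildStep r ts ts' → ChildStep r (t :: ts) (t :: ts')
end

theorem ChildStep.append_cons {r : LTree T NS NA → LTree T NS NA → Prop}
    {t t' : LTree T NS NA} (pre post : List (LTree T NS NA)) (h : Step r t t') :
    ChildStep r (pre ++ t :: post) (pre ++ t' :: post) := by
  induction pre with
  | nil => exact .head post h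
  | cons u pre ih => exact .tail u ih

inductive SubstAtRoot (β : LTree T NS NA) (A : NS) : LTree T NS NA → LTree T NS NA → Prop
  | intro : rootLabel β = .nonterm A → SubstAtRoot β A (.node (.substLeaf A) []) β

inductive FootAtRoot (n : NA) (sub : LTree T NS NA) : LTree T NS NA → LTree T NS NA → Prop
  | intro : FootAtRoot n sub (.node (.foot n) []) sub

inductive AdjoinAtRoot (β : LTree T NS NA) : LTree T NS NA → LTree T NS NA → Prop
  | intro (n : NA) (cs : List (LTree T NS NA)) {β' : LTree T NS NA} :
      rootLabel β = .anode n → FootReplace n (.node (.anode n) cs) β β' →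
      AdjoinAtRoot β (.node (.adj n) cs) β'

theorem ReplaceSubst.toStep {β t t' : LTree T NS NA} {A : NS} (h : ReplaceSubst β A t t') :
    Step (SubstAtRoot β A) t t' := by
  induction h with
  | here hβ => exact .here (.intro hβ)
  | step l pre post _ ih => exact .child l (.append_cons pre post ih)

theorem FootReplace.toStep {n : NA} {sub t t' : LTree T NS NA} (h : FootReplace n sub t t') :
    Step (FootAtRoot n sub) t t' := by
  induction h with
  | here => exact .here .intro
  | step l pre post _ ih => exact .child l (.append_cons pre post ih)

theorem Adjoin.toStep {β t t' : LTree T NS NA} (h : Adjoin β t t') :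
    Step (AdjoinAtRoot β) t t' := by
  induction h with
  | here n cs hβ hf => exact .here (.intro n cs hβ hf)
  | step l pre post _ ih => exact .child l (.append_cons pre post ih)

theorem Step.of_node_pair {r : LTree T NS NA → LTree T NS NA → Prop} {l : Lab T NS NA}
    {x s t' : LTree T NS NA} (h_root : ∀ t', ¬ r (.node l [x, s]) t')
    (h : Step r (.node l [x, s]) t') :
    (∃ x', Step r x x' ∧ t' = .node l [x', s]) ∨
      ∃ s', Step r s s' ∧ t' = .node l [x, s'] := by
  rcases h with h | ⟨_, ⟨_, hx⟩ | ⟨_, ⟨_, hs⟩ | ⟨_, ⟨⟩⟩⟩⟩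
  · exact absurd h (h_root _)
  · exact .inl ⟨_, hx, rfl⟩
  · exact .inr ⟨_, hs, rfl⟩

theorem ChildStep.of_pair_anode_term {r : LTree T NS NA → LTree T NS NA → Prop} {n : NA}
    {a : T} {cs cs' : List (LTree T NS NA)}
    (h_anode : ∀ cs t', ¬ r (.node (.anode n) cs) t')
    (h_term : ∀ t', ¬ r (.node (.term a) []) t')
    (h : ChildStep r [.node (.anode n) cs, .node (.term a) []] cs') :
    ∃ cs'', ChildStep r cs cs'' ∧ cs' = [.node (.anode n) cs'', .node (.term a) []] := by
  rcases h with ⟨_, h | ⟨_, h⟩⟩ | ⟨_, ⟨_, h | ⟨_, ⟨⟩⟩⟩ | ⟨_, ⟨⟩⟩⟩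
  · exact absurd h (h_anode _ _)
  · exact ⟨_, h, rfl⟩
  · exact absurd h (h_term _)

end LTree

namespace CopyGrammar

open LTree

abbrev Tree := LTree (Fin 2) NS3 Unit

def letterNT : Fin 2 → NS3
  | 0 => .A
  | 1 => .B

theorem letterNT_injective : Function.Injective letterNT := by decide

theorem letterNT_ne_S (c : Fin 2) : letterNT c ≠ .S := by
  fin_cases c <;> decide

def leaf (c : Fin 2) : Tree := .node (.term c) []

def foot : Tree := .node (.foot ()) []

def letterTree (c : Fin 2) : Tree := .node (.nonterm (letterNT c)) [leaf c]

inductive Slot (c : Fin 2) : Tree → Prop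
  | empty : Slot c (.node (.substLeaf (letterNT c)) [])
  | filled : Slot c (letterTree c)

/-- `Spine v cs s`: `s` is what an adjunction node `(T)` with children `cs` becomes after the
auxiliary trees for the letters of `v` have been adjoined at it, one below the other; the
substitution slots may still be open. -/
inductive Spine : List (Fin 2) → List Tree → Tree → Prop
  | nil (cs : List Tree) : Spine [] cs (.node (.adj ()) cs)
  | cons {c : Fin 2} {x s : Tree} {v : List (Fin 2)} {cs : List Tree} :
      Slot c x → Spine v [.node (.anode ()) cs, leaf c] s →
      Spine (c :: v) cs (.node (.anode ()) [x, s])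

inductive Shape : Tree → Prop
  | letter (c : Fin 2) : Shape (letterTree c)
  | initial {c : Fin 2} {x s : Tree} {v : List (Fin 2)} :
      Slot c x → Spine v [leaf c] s → Shape (.node (.nonterm .S) [x, s])
  | aux {c : Fin 2} {x s : Tree} {v : List (Fin 2)} :
      Slot c x → Spine v [foot, leaf c] s → Shape (.node (.anode ()) [x, s])

theorem Shape.eq_letterTree {β : Tree} {c : Fin 2} (hβ : Shape β)
    (hroot : rootLabel β = .nonterm (letterNT c)) : β = letterTree c := by
  cases hβ with
  | letter d => cases letterNT_injective (Lab.nonterm.inj hroot); rfl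
  | initial => cases letterNT_ne_S c (Lab.nonterm.inj hroot).symm
  | aux => cases hroot

theorem Slot.substStep {c : Fin 2} {x x' β : Tree} {N : NS3} (hx : Slot c x) (hβ : Shape β)
    (h : Step (SubstAtRoot β N) x x') : Slot c x' := by
  cases hx with
  | empty =>
    rcases h with ⟨⟨hroot⟩⟩ | ⟨_, ⟨⟩⟩
    rw [hβ.eq_letterTree hroot]
    exact .filled
  | filled => cases_type* Step ChildStep SubstAtRoot

theorem Slot.not_footStep {c : Fin 2} {x x' X : Tree} (hx : Slot c x) :
    ¬ Step (FootAtRoot () X) x x' := by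
  cases hx <;> intro h <;> cases_type* Step ChildStep FootAtRoot

theorem Slot.not_adjoinStep {c : Fin 2} {x x' β : Tree} (hx : Slot c x) :
    ¬ Step (AdjoinAtRoot β) x x' := by
  cases hx <;> intro h <;> cases_type* Step ChildStep AdjoinAtRoot

theorem Spine.substStep {v : List (Fin 2)} {cs : List Tree} {s s' β : Tree} {N : NS3}
    (hsp : Spine v cs s) (hβ : Shape β) (h : Step (SubstAtRoot β N) s s') :
    Spine v cs s' ∨ ∃ cs', ChildStep (SubstAtRoot β N) cs cs' ∧ Spine v cs' s' := by
  induction hsp generalizing s' with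
  | nil cs =>
    rcases h with ⟨⟨⟩⟩ | ⟨_, h⟩
    exact .inr ⟨_, h, .nil _⟩
  | cons hx hsp ih =>
    rcases h.of_node_pair (by rintro _ ⟨⟩) with ⟨_, hx', rfl⟩ | ⟨_, hs, rfl⟩
    · exact .inl (.cons (hx.substStep hβ hx') hsp)
    · rcases ih hs with hsp' | ⟨_, hcs, hsp'⟩
      · exact .inl (.cons hx hsp')
      · obtain ⟨cs', hcs', rfl⟩ := 
          hcs.of_pair_anode_term (by rintro _ _ ⟨⟩) (by rintro _ ⟨⟩)
        exact .inr ⟨cs', hcs', .cons hx hsp'⟩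

theorem Spine.footStep {v : List (Fin 2)} {cs : List Tree} {s s' X : Tree}
    (hsp : Spine v cs s) (h : Step (FootAtRoot () X) s s') :
    ∃ cs', ChildStep (FootAtRoot () X) cs cs' ∧ Spine v cs' s' := by
  induction hsp generalizing s' with
  | nil cs =>
    rcases h with ⟨⟨⟩⟩ | ⟨_, h⟩
    exact ⟨_, h, .nil _⟩
  | cons hx _ ih =>
    rcases h.of_node_pair (by rintro _ ⟨⟩) with ⟨_, hx', rfl⟩ | ⟨_, hs, rfl⟩
    · exact absurd hx' hx.not_footStep
    · obtain ⟨_, hcs, hsp'⟩ := ih hs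
      obtain ⟨cs', hcs', rfl⟩ := 
          hcs.of_pair_anode_term (by rintro _ _ ⟨⟩) (by rintro _ ⟨⟩)
      exact ⟨cs', hcs', .cons hx hsp'⟩

theorem Shape.adjoinAtRoot {β t' : Tree} {cs : List Tree} (hβ : Shape β)
    (h : AdjoinAtRoot β (.node (.adj ()) cs) t') : ∃ w, Spine w cs t' := by
  obtain ⟨_, _, hroot, hf⟩ := h
  cases hβ with
  | letter => cases hroot
  | initial => cases hroot
  | aux hx hsp =>
    rcases hf.toStep.of_node_pair (by rintro _ ⟨⟩) with ⟨_, hx', rfl⟩ | ⟨_, hs, rfl⟩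
    · exact absurd hx' hx.not_footStep
    · obtain ⟨_, hcs, hsp'⟩ := hsp.footStep hs
      rcases hcs with ⟨_, ⟨⟨⟩⟩ | ⟨_, ⟨⟩⟩⟩
        | ⟨_, ⟨_, ⟨⟨⟩⟩ | ⟨_, ⟨⟩⟩⟩ | ⟨_, ⟨⟩⟩⟩
      exact ⟨_, .cons hx hsp'⟩

theorem Spine.adjoinStep {v : List (Fin 2)} {cs : List Tree} {s s' β : Tree}
    (hsp : Spine v cs s) (hβ : Shape β) (h : Step (AdjoinAtRoot β) s s') :
    (∃ w, Spine w cs s') ∨ ∃ cs', ChildStep (AdjoinAtRoot β) cs cs' ∧ Spine v cs' s' := by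
  induction hsp generalizing s' with
  | nil cs =>
    rcases h with ⟨h⟩ | ⟨_, h⟩
    · exact .inl (hβ.adjoinAtRoot h)
    · exact .inr ⟨_, h, .nil _⟩
  | cons hx _ ih =>
    rcases h.of_node_pair (by rintro _ ⟨⟩) with ⟨_, hx', rfl⟩ | ⟨_, hs, rfl⟩
    · exact absurd hx' hx.not_adjoinStep
    · rcases ih hs with ⟨w, hsp'⟩ | ⟨_, hcs, hsp'⟩
      · exact .inl ⟨_, .cons hx hsp'⟩
      · obtain ⟨cs', hcs', rfl⟩ := 
          hcs.of_pair_anode_term (by rintro _ _ ⟨⟩) (by rintro _ ⟨⟩)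
        exact .inr ⟨cs', hcs', .cons hx hsp'⟩

theorem Shape.substStep {t t' β : Tree} {N : NS3} (ht : Shape t) (hβ : Shape β)
    (h : Step (SubstAtRoot β N) t t') : Shape t' := by
  cases ht with
  | letter => cases_type* Step ChildStep SubstAtRoot
  | initial hx hsp =>
    rcases h.of_node_pair (by rintro _ ⟨⟩) with ⟨_, hx', rfl⟩ | ⟨_, hs, rfl⟩
    · exact .initial (hx.substStep hβ hx') hsp
    · rcases hsp.substStep hβ hs with hsp' | ⟨_, hcs, -⟩
      · exact .initial hx hsp'
      · cases_type* ChildStep Step SubstAtRoot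
  | aux hx hsp =>
    rcases h.of_node_pair (by rintro _ ⟨⟩) with ⟨_, hx', rfl⟩ | ⟨_, hs, rfl⟩
    · exact .aux (hx.substStep hβ hx') hsp
    · rcases hsp.substStep hβ hs with hsp' | ⟨_, hcs, -⟩
      · exact .aux hx hsp'
      · cases_type* ChildStep Step SubstAtRoot

theorem Shape.adjoinStep {t t' β : Tree} (ht : Shape t) (hβ : Shape β)
    (h : Step (AdjoinAtRoot β) t t') : Shape t' := by
  cases ht with
  | letter => cases_type* Step ChildStep AdjoinAtRoot
  | initial hx hsp =>
    rcases h.of_node_pair (by rintro _ ⟨⟩) with ⟨_, hx', rfl⟩ | ⟨_, hs, rfl⟩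
    · exact absurd hx' hx.not_adjoinStep
    · rcases hsp.adjoinStep hβ hs with ⟨_, hsp'⟩ | ⟨_, hcs, -⟩
      · exact .initial hx hsp'
      · cases_type* ChildStep Step AdjoinAtRoot
  | aux hx hsp =>
    rcases h.of_node_pair (by rintro _ ⟨⟩) with ⟨_, hx', rfl⟩ | ⟨_, hs, rfl⟩
    · exact absurd hx' hx.not_adjoinStep
    · rcases hsp.adjoinStep hβ hs with ⟨_, hsp'⟩ | ⟨_, hcs, -⟩
      · exact .aux hx hsp'
      · cases_type* ChildStep Step AdjoinAtRoot

theorem shape_of_derived {t : Tree} (ht : copyGrammar.Derived t) : Shape t := by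
  induction ht with
  | init h =>
    rcases h with rfl | rfl | rfl | rfl
    · exact .initial (c := 0) .empty (.nil _)
    · exact .initial (c := 1) .empty (.nil _)
    · exact .letter 0
    · exact .letter 1
  | auxMem h =>
    rcases h with rfl | rfl
    · exact .aux (c := 0) .empty (.nil _)
    · exact .aux (c := 1) .empty (.nil _)
  | subst _ _ _ h ht hβ => exact ht.substStep hβ h.toStep
  | adjoin _ _ h ht hβ => exact ht.adjoinStep hβ h.toStep

def spineTree : List (Fin 2) → List Tree → Tree
  | [], cs => .node (.adj ()) cs
  | c :: v, cs =>
    .node (.anode ()) [letterTree c, spineTree v [.node (.anode ()) cs, leaf c]]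

def startTree (c : Fin 2) (v : List (Fin 2)) : Tree :=
  .node (.nonterm .S) [letterTree c, spineTree v [leaf c]]

theorem Slot.eq_letterTree {c : Fin 2} {x : Tree} (hx : Slot c x) (hc : Complete x) :
    x = letterTree c := by
  cases hx with
  | empty => cases hc
  | filled => rfl

theorem Spine.eq_spineTree {v : List (Fin 2)} {cs : List Tree} {s : Tree}
    (hsp : Spine v cs s) (hc : Complete s) : s = spineTree v cs := by
  induction hsp with
  | nil => rfl
  | cons hx _ ih =>
    obtain ⟨-, hcx, hcs, -⟩ := hc
    rw [hx.eq_letterTree hcx, ih hcs, spineTree]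

theorem Shape.eq_startTree {t : Tree} (ht : Shape t) (hroot : rootLabel t = .nonterm .S)
    (hc : Complete t) : ∃ c v, t = startTree c v := by
  cases ht with
  | letter c => cases letterNT_ne_S c (Lab.nonterm.inj hroot)
  | initial hx hsp =>
    obtain ⟨-, hcx, hcs, -⟩ := hc
    exact ⟨_, _, by rw [hx.eq_letterTree hcx, hsp.eq_spineTree hcs, startTree]⟩
  | aux => cases hroot

theorem yield_spineTree (v : List (Fin 2)) (cs : List Tree) :
    yield (spineTree v cs) = v ++ yields cs ++ v := by
  induction v generalizing cs with
  | nil => simp [spineTree, yield]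
  | cons c v ih => simp [spineTree, yield, yields, ih, letterTree, leaf]

theorem yield_startTree (c : Fin 2) (v : List (Fin 2)) :
    yield (startTree c v) = (c :: v) ++ (c :: v) := by
  simp [startTree, yield, yields, yield_spineTree, letterTree, leaf]

theorem spineTree_complete (v : List (Fin 2)) {cs : List Tree} (hne : cs ≠ [])
    (hc : CompleteList cs) : Complete (spineTree v cs) := by
  induction v generalizing cs with
  | nil => exact ⟨hne, hc⟩
  | cons c v ih =>
    exact ⟨List.cons_ne_nil _ _, ⟨List.cons_ne_nil _ _, rfl, trivial⟩,
      ih (List.cons_ne_nil _ _) ⟨⟨hne, hc⟩, rfl, trivial⟩, trivial⟩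

theorem startTree_complete (c : Fin 2) (v : List (Fin 2)) : Complete (startTree c v) :=
  ⟨List.cons_ne_nil _ _, ⟨List.cons_ne_nil _ _, rfl, trivial⟩,
    spineTree_complete v (List.cons_ne_nil _ _) ⟨rfl, trivial⟩, trivial⟩

def auxTree (c : Fin 2) (v : List (Fin 2)) : Tree :=
  .node (.anode ()) [letterTree c, spineTree v [foot, leaf c]]

theorem footReplace_spineTree (v : List (Fin 2)) {X h h' : Tree} (hf : FootReplace () X h h')
    (cs : List Tree) : FootReplace () X (spineTree v (h :: cs)) (spineTree v (h' :: cs)) := by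
  induction v generalizing h h' cs with
  | nil => exact .step _ [] cs hf
  | cons c v ih =>
    exact .step _ [letterTree c] [] (ih (.step _ [] cs hf) [leaf c])

theorem adjoin_auxTree (c : Fin 2) (v : List (Fin 2)) (cs : List Tree) :
    Adjoin (auxTree c v) (.node (.adj ()) cs) (spineTree (c :: v) cs) :=
  .here () cs rfl (.step _ [letterTree c] [] (footReplace_spineTree v .here [leaf c]))

theorem letterTree_derived (c : Fin 2) : copyGrammar.Derived (letterTree c) := by
  fin_cases c <;> exact .init (by simp [copyGrammar, letterTree, letterNT, leaf])

theorem replaceSubst_letterTree (l : Lab (Fin 2) NS3 Unit) (c : Fin 2) (s : Tree) :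
    ReplaceSubst (letterTree c) (letterNT c) (.node l [.node (.substLeaf (letterNT c)) [], s])
      (.node l [letterTree c, s]) :=
  .step l [] [s] (.here rfl)

theorem auxTree_nil_derived (c : Fin 2) : copyGrammar.Derived (auxTree c []) := by
  refine .subst _ (.auxMem ?_) (letterTree_derived c) (replaceSubst_letterTree _ c _)
  fin_cases c <;> simp [copyGrammar, spineTree, foot, leaf, letterNT]

theorem auxTree_derived (c : Fin 2) (v : List (Fin 2)) : copyGrammar.Derived (auxTree c v) := by
  induction v generalizing c with
  | nil => exact auxTree_nil_derived c
  | cons d v ih =>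
    exact .adjoin (auxTree_nil_derived c) (ih d)
      (.step (.anode ()) [letterTree c] [] (adjoin_auxTree d v _))

theorem startTree_derived (c : Fin 2) (v : List (Fin 2)) : copyGrammar.Derived (startTree c v) := by
  have hnil : copyGrammar.Derived (startTree c []) := by
    refine .subst _ (.init ?_) (letterTree_derived c) (replaceSubst_letterTree _ c _)
    fin_cases c <;> simp [copyGrammar, spineTree, leaf, letterNT]
  cases v with
  | nil => exact hnil
  | cons d v =>
    exact .adjoin hnil (auxTree_derived d v)
      (.step (.nonterm NS3.S) [letterTree c] [] (adjoin_auxTree d v [leaf c]))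

end CopyGrammar

/-- The copy grammar, where adjunction is only allowed at the marked nodes (T),
generates exactly the copy language { w w : w ∈ {a,b}⁺ }. -/
theorem copyGrammar_generates_copy_language :
    copyGrammar.language = {x | ∃ w : List (Fin 2), w ≠ [] ∧ x = w ++ w} := by
  ext x
  constructor
  · rintro ⟨t, hd, hroot, hc, rfl⟩
    obtain ⟨c, v, rfl⟩ := (CopyGrammar.shape_of_derived hd).eq_startTree hroot hc
    exact ⟨c :: v, List.cons_ne_nil _ _, CopyGrammar.yield_startTree c v⟩
  · rintro ⟨w, hw, rfl⟩
    obtain ⟨c, v, rfl⟩ := List.exists_cons_of_ne_nil hw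
    exact ⟨CopyGrammar.startTree c v, CopyGrammar.startTree_derived c v, rfl,
      CopyGrammar.startTree_complete c v, CopyGrammar.yield_startTree c v⟩
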